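/- For every natural number τ, Imp(3, q_τ) ≤ 3/16, and 3/16 < Q(3) = (1/(2·√3))·(2/3) = 1/(3·√3). Hence for degree D = 3 the optimal one-step QAOA on triangle-free 3-regular graphs strictly outperforms every one-step hard-threshold local classical algorithm. -/
import Mathlib


/-- `Imp D q` is the expected improvement over `1/2`, per edge, of the fraction of
edges cut by the one-step local algorithm on a triangle-free `D`-regular graph with
flip rule `q`:
`Imp(D,q) = (1/4)·[(∑_{n=0}^{D−1} 2^{−(D−1)}·C(D−1,n)·q(n))²
  − (∑_{n=0}^{D−1} 2^{−(D−1)}·C(D−1,n)·q(n+1))²]`. -/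
noncomputable def Imp (D : ℕ) (q : ℕ → ℝ) : ℝ :=
  (1 / 4) * ((∑ n ∈ Finset.range D, ((D - 1).choose n : ℝ) / 2 ^ (D - 1) * q n) ^ 2
    - (∑ n ∈ Finset.range D, ((D - 1).choose n : ℝ) / 2 ^ (D - 1) * q (n + 1)) ^ 2)

/-- For every natural number `τ`, `Imp(3, q_τ) ≤ 3/16`, and
`3/16 < Q(3) = (1/(2·√3))·(2/3) = 1/(3·√3)`, where `q_τ(n) = 1` if `n < τ` and `−1`
otherwise.  Hence for degree `D = 3` the optimal one-step QAOA strictly outperforms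
every one-step hard-threshold local classical algorithm on triangle-free 3-regular
graphs. -/
theorem stmt17 :
    (∀ τ : ℕ, Imp 3 (fun n => if n < τ then (1 : ℝ) else -1) ≤ 3 / 16) ∧
    (3 / 16 : ℝ) < (1 / (2 * Real.sqrt 3)) * (2 / 3) ∧
    (1 / (2 * Real.sqrt 3)) * (2 / 3) = 1 / (3 * Real.sqrt 3) := by
  have hs : Real.sqrt 3 ^ 2 = 3 := Real.sq_sqrt (by norm_num)
  have hpos : (0 : ℝ) < Real.sqrt 3 := Real.sqrt_pos.mpr (by norm_num)
  refine ⟨?_, ?_, ?_⟩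
  · intro τ
    rcases τ with _ | _ | _ | _ | τ
    · norm_num [Imp, Finset.sum_range_succ]
    · norm_num [Imp, Finset.sum_range_succ]
    · norm_num [Imp, Finset.sum_range_succ]
    · norm_num [Imp, Finset.sum_range_succ]
    · have h : ∀ n, n ≤ 3 → (if n < τ + 4 then (1 : ℝ) else -1) = 1 := fun n hn => by
        rw [if_pos (by omega)]
      simp only [Imp, Finset.sum_range_succ, Finset.sum_range_zero]
      rw [h 0 (by norm_num), h 1 (by norm_num), h 2 (by norm_num), h 3 (by norm_num)]
      norm_num
  · have h : Real.sqrt 3 < 16 / 9 := by nlinarith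
    have he : (1 : ℝ) / (2 * Real.sqrt 3) * (2 / 3) = 1 / (3 * Real.sqrt 3) := by
      field_simp
    rw [he, lt_div_iff₀ (by positivity)]
    nlinarith
  · field_simp
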